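/- arXiv:math/9811025 — 4 statements merged into one kernel-verified Lean document; each statement's English description precedes it below -/
import Mathlib

section
/- For n ≥ 2 and ω = exp(2πi/n), (1/n) · Σ_{α=1}^{n-1} ω^α (1 + ω^α)/(1 - ω^α) = -(n-2)/n. -/
/-- Lemma 2.18 (formula f178): for n ≥ 2, ω = exp(2πi/n),
(1/n) Σ_{α=1}^{n-1} ω^α (1+ω^α)/(1-ω^α) = -(n-2)/n. -/
theorem qGD_sum_omega_q0 (n : ℕ) (hn : 2 ≤ n) :
    (1 / (n : ℂ)) * ∑ α ∈ Finset.Ico 1 n,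
      Complex.exp (2 * Real.pi * Complex.I / n) ^ α *
        ((1 + Complex.exp (2 * Real.pi * Complex.I / n) ^ α) /
          (1 - Complex.exp (2 * Real.pi * Complex.I / n) ^ α))
      = -(((n : ℂ) - 2) / (n : ℂ)) := by
  have hn0 : n ≠ 0 := by omega
  set ω : ℂ := Complex.exp (2 * Real.pi * Complex.I / n) with hω
  have hprim : IsPrimitiveRoot ω n := Complex.isPrimitiveRoot_exp n hn0
  have hne : ∀ α ∈ Finset.Ico 1 n, (1 : ℂ) - ω ^ α ≠ 0 := by
    intro α hα
    rw [Finset.mem_Ico] at hα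
    have := hprim.pow_ne_one_of_pos_of_lt (by omega : α ≠ 0) hα.2
    intro h
    exact this (by linear_combination -h)
  -- sum of ω^α over Ico 1 n is -1
  have hsum1 : ∑ α ∈ Finset.Ico 1 n, ω ^ α = -1 := by
    have h0 : ∑ α ∈ Finset.range n, ω ^ α = 0 := hprim.geom_sum_eq_zero hn
    have : ∑ α ∈ Finset.range n, ω ^ α = ω ^ 0 + ∑ α ∈ Finset.Ico 1 n, ω ^ α := by
      rw [Finset.range_eq_Ico, ← Finset.sum_eq_sum_Ico_succ_bot (by omega : 0 < n)]
    rw [this, pow_zero] at h0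
    linear_combination h0
  -- sum of 1/(1-ω^α)
  have hS : ∑ α ∈ Finset.Ico 1 n, (1 : ℂ) / (1 - ω ^ α) = (n - 1) / 2 := by
    have hrefl : ∑ α ∈ Finset.Ico 1 n, (1 : ℂ) / (1 - ω ^ α)
        = ∑ α ∈ Finset.Ico 1 n, (1 : ℂ) / (1 - ω ^ (n - α)) := by
      apply Finset.sum_nbij' (fun α => n - α) (fun α => n - α)
      · intro a ha; rw [Finset.mem_Ico] at *; omega
      · intro a ha; rw [Finset.mem_Ico] at *; omega
      · intro a ha; rw [Finset.mem_Ico] at ha; omega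
      · intro a ha; rw [Finset.mem_Ico] at ha; omega
      · intro a ha; rw [Finset.mem_Ico] at ha
        congr 3; omega
    have h2S : (2 : ℂ) * ∑ α ∈ Finset.Ico 1 n, (1 : ℂ) / (1 - ω ^ α) = n - 1 := by
      rw [two_mul]
      nth_rewrite 2 [hrefl]
      rw [← Finset.sum_add_distrib]
      have : ∀ α ∈ Finset.Ico 1 n,
          (1 : ℂ) / (1 - ω ^ α) + 1 / (1 - ω ^ (n - α)) = 1 := by
        intro α hα
        have hαn : α < n ∧ 1 ≤ α := by rw [Finset.mem_Ico] at hα; omega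
        have hmul : ω ^ (n - α) * ω ^ α = 1 := by
          rw [← pow_add]
          have : n - α + α = n := by omega
          rw [this, hprim.pow_eq_one]
        have h1 := hne α hα
        have h2 : (1 : ℂ) - ω ^ (n - α) ≠ 0 := by
          intro h
          have : ω ^ (n - α) = 1 := by linear_combination -h
          rw [this, one_mul] at hmul
          exact h1 (by linear_combination -hmul)
        field_simp
        linear_combination -hmul
      rw [Finset.sum_congr rfl this, Finset.sum_const, Nat.card_Ico, nsmul_eq_mul,
        Nat.cast_sub (by omega : 1 ≤ n)]
      push_cast
      ring
    field_simp at h2S ⊢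
    linear_combination h2S
  have hterm : ∀ α ∈ Finset.Ico 1 n,
      ω ^ α * ((1 + ω ^ α) / (1 - ω ^ α))
        = -ω ^ α - 2 + 2 * (1 / (1 - ω ^ α)) := by
    intro α hα
    have h1 := hne α hα
    field_simp
    ring
  rw [Finset.sum_congr rfl hterm]
  rw [Finset.sum_add_distrib, Finset.sum_sub_distrib, Finset.sum_neg_distrib, hsum1,
    ← Finset.mul_sum, hS, Finset.sum_const, Nat.card_Ico, nsmul_eq_mul,
    Nat.cast_sub (by omega : 1 ≤ n)]
  have hnc : (n : ℂ) ≠ 0 := Nat.cast_ne_zero.mpr hn0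
  push_cast
  field_simp
  ring
end

section
/- For n ≥ 2 and ω = exp(2πi/n), (1/n) · Σ_{α=1}^{n-1} ω^{-α} (1 + ω^α)/(1 - ω^α) = (n-2)/n. -/
/-!
With `z = ω^α` the summand is `z⁻¹ (1 + z) / (1 - z) = z⁻¹ + 2 / (1 - z)`, so the sum splits in
two. The `ω^{-α}`, `1 ≤ α < n`, are the nontrivial `n`-th roots of unity and add up to `-1`.
Pairing `α` with `n - α` replaces `z` by `z⁻¹`, and `1 / (1 - z) + 1 / (1 - z⁻¹) = 1`, so the
`1 / (1 - ω^α)` add up to `(n - 1) / 2`. Altogether the sum is `-1 + (n - 1) = n - 2`.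
-/

open Finset

section Field

variable {K : Type*} [Field K] {z : K}

lemma one_div_one_sub_add_one_div_one_sub_inv (h0 : z ≠ 0) (h1 : z ≠ 1) :
    1 / (1 - z) + 1 / (1 - z⁻¹) = 1 := by
  have h1' : 1 - z ≠ 0 := sub_ne_zero.mpr h1.symm
  have h2' : z - 1 ≠ 0 := sub_ne_zero.mpr h1
  rw [show 1 - z⁻¹ = (z - 1) / z by field_simp]
  field_simp
  ring

lemma inv_mul_one_add_div_one_sub (h0 : z ≠ 0) (h1 : z ≠ 1) :
    z⁻¹ * ((1 + z) / (1 - z)) = z⁻¹ + 2 * (1 / (1 - z)) := by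
  have : 1 - z ≠ 0 := sub_ne_zero.mpr h1.symm
  field_simp
  ring

end Field

namespace IsPrimitiveRoot

lemma sum_Ico_one_pow {R : Type*} [CommRing R] [IsDomain R] {ζ : R} {k : ℕ}
    (hζ : IsPrimitiveRoot ζ k) (hk : 1 < k) : ∑ α ∈ Ico 1 k, ζ ^ α = -1 := by
  have h := hζ.geom_sum_eq_zero hk
  rw [sum_range_eq_add_Ico _ (by omega), pow_zero] at h
  exact eq_neg_of_add_eq_zero_right h

variable {K : Type*} [Field K] {ζ : K} {k : ℕ}

lemma pow_sub_eq_inv_pow (hζ : IsPrimitiveRoot ζ k) (hk : k ≠ 0) {α : ℕ} (hα : α ≤ k) :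
    ζ ^ (k - α) = (ζ ^ α)⁻¹ := by
  rw [pow_sub₀ _ (hζ.ne_zero hk) hα, hζ.pow_eq_one, one_mul]

lemma two_mul_sum_Ico_one_div_one_sub_pow (hζ : IsPrimitiveRoot ζ k) (hk : k ≠ 0) :
    2 * ∑ α ∈ Ico 1 k, 1 / (1 - ζ ^ α) = k - 1 := by
  have hreflect : ∑ α ∈ Ico 1 k, 1 / (1 - ζ ^ α) = ∑ α ∈ Ico 1 k, 1 / (1 - ζ ^ (k - α)) := by
    rw [sum_Ico_reflect (fun α ↦ 1 / (1 - ζ ^ α)) 1 (Nat.le_succ k), Nat.add_sub_cancel_left,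
      Nat.add_sub_cancel]
  have hpair : ∀ α ∈ Ico 1 k, 1 / (1 - ζ ^ α) + 1 / (1 - ζ ^ (k - α)) = 1 := by
    intro α hα
    rw [mem_Ico] at hα
    rw [hζ.pow_sub_eq_inv_pow hk hα.2.le]
    exact one_div_one_sub_add_one_div_one_sub_inv (pow_ne_zero _ (hζ.ne_zero hk))
      (hζ.pow_ne_one_of_pos_of_lt (by omega) hα.2)
  calc 2 * ∑ α ∈ Ico 1 k, 1 / (1 - ζ ^ α)
      = ∑ α ∈ Ico 1 k, (1 / (1 - ζ ^ α) + 1 / (1 - ζ ^ (k - α))) := by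
        rw [sum_add_distrib, ← hreflect, two_mul]
    _ = k - 1 := by
        rw [sum_congr rfl hpair, sum_const, Nat.card_Ico, nsmul_one, Nat.cast_sub (by omega),
          Nat.cast_one]

end IsPrimitiveRoot

/-- Lemma 2.18 (formula f180): for n ≥ 2, ω = exp(2πi/n),
(1/n) Σ_{α=1}^{n-1} ω^{-α} (1+ω^α)/(1-ω^α) = (n-2)/n. -/
theorem qGD_sum_omega_inv_q0 (n : ℕ) (hn : 2 ≤ n) :
    (1 / (n : ℂ)) * ∑ α ∈ Finset.Ico 1 n,
      Complex.exp (2 * Real.pi * Complex.I / n) ^ (-(α : ℤ)) *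
        ((1 + Complex.exp (2 * Real.pi * Complex.I / n) ^ α) /
          (1 - Complex.exp (2 * Real.pi * Complex.I / n) ^ α))
      = ((n : ℂ) - 2) / (n : ℂ) := by
  set ω : ℂ := Complex.exp (2 * Real.pi * Complex.I / n)
  have hω : IsPrimitiveRoot ω n := Complex.isPrimitiveRoot_exp n (by omega)
  have hsplit : ∀ α ∈ Ico 1 n, ω ^ (-(α : ℤ)) * ((1 + ω ^ α) / (1 - ω ^ α))
      = ω⁻¹ ^ α + 2 * (1 / (1 - ω ^ α)) := by
    intro α hα
    rw [mem_Ico] at hα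
    rw [zpow_neg, zpow_natCast, inv_pow]
    exact inv_mul_one_add_div_one_sub (pow_ne_zero _ (hω.ne_zero (by omega)))
      (hω.pow_ne_one_of_pos_of_lt (by omega) hα.2)
  rw [sum_congr rfl hsplit, sum_add_distrib, ← mul_sum, hω.inv.sum_Ico_one_pow (by omega),
    hω.two_mul_sum_Ico_one_div_one_sub_pow (by omega)]
  ring
end

section
/- Let 𝔍 be a Lie algebra over a field which decomposes as a direct sum of subspaces 𝔍 = 𝔍₊ ⊕ 𝔍₀ ⊕ 𝔍₋ where 𝔍₊, 𝔍₋, 𝔍₀ are Lie subalgebras, 𝔍₀ is abelian, and [𝔍±, 𝔍₀] ⊆ 𝔍±. Let P₊, P₋, P₀ be the projections onto the summands and r = (1/2)(P₊ - P₋). Then for any linear operators a, b, c, d on 𝔍₀, the operator R on 𝔍 ⊕ 𝔍 given in block form by R = [[r + a P₀, b P₀],[c P₀, r + d P₀]] satisfies the modified classical Yang-Baxter equation: [RX, RY] - R([RX, Y] + [X, RY]) = -(1/4)[X, Y] for all X, Y ∈ 𝔍 ⊕ 𝔍. -/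
/-!
On each component, `R` acts as `r + α` with `α` in `𝔍₀ = range P₀`. For any scalar `s`, the operator
`r = s • (P₊ - P₋)` satisfies the mCYBE with constant `-s²`: `r` acts by `±s` on the brackets landing
in `𝔍±`, and the brackets of `𝔍₊` with `𝔍₋` cancel. Adding `α` changes nothing, since `ad α`
preserves `𝔍₊` and `𝔍₋` and hence commutes with `r`, while `𝔍₀` is abelian. Finally
`[RX, Y] + [X, RY]` has no `𝔍₀`-component, so the blocks `aP₀, bP₀, cP₀, dP₀` vanish on it.
-/

section Projections

variable {R M N : Type*} [Semiring R] [AddCommMonoid M] [AddCommMonoid N] [Module R M] [Module R N]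

theorem apply_eq_zero_of_comp_eq_zero {P : M →ₗ[R] M} {Q : M →ₗ[R] N} (h : Q ∘ₗ P = 0)
    {u : M} (hu : P u = u) : Q u = 0 := by
  rw [← hu]
  exact LinearMap.congr_fun h u

theorem apply_mem_range_of_comp_comp_eq {P f : M →ₗ[R] M} (h : P ∘ₗ f ∘ₗ P = f) (t : M) :
    f t ∈ LinearMap.range P := by
  rw [← h]
  exact LinearMap.mem_range_self P _

end Projections

section SmulSub

variable {R M : Type*} [CommSemiring R] [AddCommGroup M] [Module R M] {Pp Pm : M →ₗ[R] M}

theorem smul_sub_apply_of_apply_left_eq (hmp : Pm ∘ₗ Pp = 0) (s : R) {u : M} (hu : Pp u = u) :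
    (s • (Pp - Pm)) u = s • u := by
  simp [hu, apply_eq_zero_of_comp_eq_zero hmp hu]

theorem smul_sub_apply_of_apply_right_eq (hpm : Pp ∘ₗ Pm = 0) (s : R) {u : M} (hu : Pm u = u) :
    (s • (Pp - Pm)) u = -(s • u) := by
  simp [hu, apply_eq_zero_of_comp_eq_zero hpm hu]

end SmulSub

section Lie

variable {R L : Type*} [CommRing R] [LieRing L] [LieAlgebra R L]

theorem apply_lie_swap_eq {P : L →ₗ[R] L} {u v : L} (h : P ⁅u, v⁆ = ⁅u, v⁆) :
    P ⁅v, u⁆ = ⁅v, u⁆ := by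
  rw [← lie_skew, map_neg, h]

variable {Pp Pm P0 : L →ₗ[R] L}

theorem smul_sub_apply_lie_of_mem_range (hsum : Pp + Pm + P0 = LinearMap.id)
    (hpm : Pp ∘ₗ Pm = 0) (hmp : Pm ∘ₗ Pp = 0) (habel : ∀ x y : L, ⁅P0 x, P0 y⁆ = 0)
    (hmixp : ∀ x y : L, Pp ⁅Pp x, P0 y⁆ = ⁅Pp x, P0 y⁆)
    (hmixm : ∀ x y : L, Pm ⁅Pm x, P0 y⁆ = ⁅Pm x, P0 y⁆)
    (s : R) {α : L} (hα : α ∈ LinearMap.range P0) (y : L) :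
    (s • (Pp - Pm)) ⁅α, y⁆ = ⁅α, (s • (Pp - Pm)) y⁆ := by
  obtain ⟨u, rfl⟩ := hα
  have hy : Pp y + Pm y + P0 y = y := LinearMap.congr_fun hsum y
  conv_lhs => rw [← hy]
  rw [lie_add, lie_add, habel, add_zero, map_add,
    smul_sub_apply_of_apply_left_eq hmp s (apply_lie_swap_eq (hmixp y u)),
    smul_sub_apply_of_apply_right_eq hpm s (apply_lie_swap_eq (hmixm y u))]
  simp [sub_eq_add_neg]

theorem apply_lie_eq_zero_of_mem_range (hsum : Pp + Pm + P0 = LinearMap.id)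
    (h0p : P0 ∘ₗ Pp = 0) (h0m : P0 ∘ₗ Pm = 0) (habel : ∀ x y : L, ⁅P0 x, P0 y⁆ = 0)
    (hmixp : ∀ x y : L, Pp ⁅Pp x, P0 y⁆ = ⁅Pp x, P0 y⁆)
    (hmixm : ∀ x y : L, Pm ⁅Pm x, P0 y⁆ = ⁅Pm x, P0 y⁆)
    {α : L} (hα : α ∈ LinearMap.range P0) (y : L) : P0 ⁅α, y⁆ = 0 := by
  obtain ⟨u, rfl⟩ := hα
  have hy : Pp y + Pm y + P0 y = y := LinearMap.congr_fun hsum y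
  rw [← hy, lie_add, lie_add, habel, add_zero, map_add,
    apply_eq_zero_of_comp_eq_zero h0p (apply_lie_swap_eq (hmixp y u)),
    apply_eq_zero_of_comp_eq_zero h0m (apply_lie_swap_eq (hmixm y u)), add_zero]

theorem smul_sub_mcybe (hsum : Pp + Pm + P0 = LinearMap.id)
    (hpm : Pp ∘ₗ Pm = 0) (hmp : Pm ∘ₗ Pp = 0)
    (hsubp : ∀ x y : L, Pp ⁅Pp x, Pp y⁆ = ⁅Pp x, Pp y⁆)
    (hsubm : ∀ x y : L, Pm ⁅Pm x, Pm y⁆ = ⁅Pm x, Pm y⁆)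
    (habel : ∀ x y : L, ⁅P0 x, P0 y⁆ = 0)
    (hmixp : ∀ x y : L, Pp ⁅Pp x, P0 y⁆ = ⁅Pp x, P0 y⁆)
    (hmixm : ∀ x y : L, Pm ⁅Pm x, P0 y⁆ = ⁅Pm x, P0 y⁆) (s : R) (x y : L) :
    ⁅(s • (Pp - Pm)) x, (s • (Pp - Pm)) y⁆
      - (s • (Pp - Pm)) (⁅(s • (Pp - Pm)) x, y⁆ + ⁅x, (s • (Pp - Pm)) y⁆)
      = -(s ^ 2 • ⁅x, y⁆) := by
  have hx : Pp x + Pm x + P0 x = x := LinearMap.congr_fun hsum x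
  have hy : Pp y + Pm y + P0 y = y := LinearMap.congr_fun hsum y
  have hpq := smul_sub_apply_of_apply_left_eq hmp s (hsubp x y)
  have hpw := smul_sub_apply_of_apply_left_eq hmp s (hmixp x y)
  have hzq := smul_sub_apply_of_apply_left_eq hmp s (apply_lie_swap_eq (hmixp y x))
  have hmn := smul_sub_apply_of_apply_right_eq hpm s (hsubm x y)
  have hmw := smul_sub_apply_of_apply_right_eq hpm s (hmixm x y)
  have hzn := smul_sub_apply_of_apply_right_eq hpm s (apply_lie_swap_eq (hmixm y x))
  have hzw := habel x y
  have hr : ∀ u, (s • (Pp - Pm)) u = s • Pp u - s • Pm u := fun u => smul_sub s (Pp u) (Pm u)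
  rw [hr x, hr y]
  generalize Pp x = p, Pm x = m, P0 x = z, Pp y = q, Pm y = n, P0 y = w at *
  subst hx hy
  simp only [lie_add, add_lie, lie_sub, sub_lie, lie_smul, smul_lie, map_add, map_sub, map_smul,
    hpq, hpw, hzq, hmn, hmw, hzn, hzw]
  match_scalars <;> ring

theorem apply_lie_smul_sub_add_lie_smul_sub_eq_zero (hsum : Pp + Pm + P0 = LinearMap.id)
    (h0p : P0 ∘ₗ Pp = 0) (h0m : P0 ∘ₗ Pm = 0)
    (hsubp : ∀ x y : L, Pp ⁅Pp x, Pp y⁆ = ⁅Pp x, Pp y⁆)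
    (hsubm : ∀ x y : L, Pm ⁅Pm x, Pm y⁆ = ⁅Pm x, Pm y⁆)
    (hmixp : ∀ x y : L, Pp ⁅Pp x, P0 y⁆ = ⁅Pp x, P0 y⁆)
    (hmixm : ∀ x y : L, Pm ⁅Pm x, P0 y⁆ = ⁅Pm x, P0 y⁆) (s : R) (x y : L) :
    P0 (⁅(s • (Pp - Pm)) x, y⁆ + ⁅x, (s • (Pp - Pm)) y⁆) = 0 := by
  have hx : Pp x + Pm x + P0 x = x := LinearMap.congr_fun hsum x
  have hy : Pp y + Pm y + P0 y = y := LinearMap.congr_fun hsum y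
  have hpq := apply_eq_zero_of_comp_eq_zero h0p (hsubp x y)
  have hpw := apply_eq_zero_of_comp_eq_zero h0p (hmixp x y)
  have hzq := apply_eq_zero_of_comp_eq_zero h0p (apply_lie_swap_eq (hmixp y x))
  have hmn := apply_eq_zero_of_comp_eq_zero h0m (hsubm x y)
  have hmw := apply_eq_zero_of_comp_eq_zero h0m (hmixm x y)
  have hzn := apply_eq_zero_of_comp_eq_zero h0m (apply_lie_swap_eq (hmixm y x))
  simp only [LinearMap.smul_apply, LinearMap.sub_apply]
  generalize Pp x = p, Pm x = m, P0 x = z, Pp y = q, Pm y = n, P0 y = w at *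
  subst hx hy
  simp only [lie_add, add_lie, lie_sub, sub_lie, lie_smul, smul_lie, map_add, map_sub, map_smul,
    hpq, hpw, hzq, hmn, hmw, hzn]
  match_scalars <;> ring

theorem apply_lie_add_add_lie_add_eq_zero_of_mem_range (hsum : Pp + Pm + P0 = LinearMap.id)
    (h0p : P0 ∘ₗ Pp = 0) (h0m : P0 ∘ₗ Pm = 0)
    (hsubp : ∀ x y : L, Pp ⁅Pp x, Pp y⁆ = ⁅Pp x, Pp y⁆)
    (hsubm : ∀ x y : L, Pm ⁅Pm x, Pm y⁆ = ⁅Pm x, Pm y⁆)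
    (habel : ∀ x y : L, ⁅P0 x, P0 y⁆ = 0)
    (hmixp : ∀ x y : L, Pp ⁅Pp x, P0 y⁆ = ⁅Pp x, P0 y⁆)
    (hmixm : ∀ x y : L, Pm ⁅Pm x, P0 y⁆ = ⁅Pm x, P0 y⁆) (s : R) (x y : L) {α β : L}
    (hα : α ∈ LinearMap.range P0) (hβ : β ∈ LinearMap.range P0) :
    P0 (⁅(s • (Pp - Pm)) x + α, y⁆ + ⁅x, (s • (Pp - Pm)) y + β⁆) = 0 := by
  rw [add_lie, lie_add, add_add_add_comm, map_add,
    apply_lie_smul_sub_add_lie_smul_sub_eq_zero hsum h0p h0m hsubp hsubm hmixp hmixm, map_add,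
    apply_lie_eq_zero_of_mem_range hsum h0p h0m habel hmixp hmixm hα, ← lie_skew, map_neg,
    apply_lie_eq_zero_of_mem_range hsum h0p h0m habel hmixp hmixm hβ, neg_zero, add_zero, zero_add]

theorem smul_sub_add_mcybe_of_mem_range (hsum : Pp + Pm + P0 = LinearMap.id)
    (hpm : Pp ∘ₗ Pm = 0) (hmp : Pm ∘ₗ Pp = 0)
    (hsubp : ∀ x y : L, Pp ⁅Pp x, Pp y⁆ = ⁅Pp x, Pp y⁆)
    (hsubm : ∀ x y : L, Pm ⁅Pm x, Pm y⁆ = ⁅Pm x, Pm y⁆)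
    (habel : ∀ x y : L, ⁅P0 x, P0 y⁆ = 0)
    (hmixp : ∀ x y : L, Pp ⁅Pp x, P0 y⁆ = ⁅Pp x, P0 y⁆)
    (hmixm : ∀ x y : L, Pm ⁅Pm x, P0 y⁆ = ⁅Pm x, P0 y⁆) (s : R) (x y : L) {α β : L}
    (hα : α ∈ LinearMap.range P0) (hβ : β ∈ LinearMap.range P0) :
    ⁅(s • (Pp - Pm)) x + α, (s • (Pp - Pm)) y + β⁆
      - (s • (Pp - Pm)) (⁅(s • (Pp - Pm)) x + α, y⁆ + ⁅x, (s • (Pp - Pm)) y + β⁆)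
      = -(s ^ 2 • ⁅x, y⁆) := by
  have hαy := smul_sub_apply_lie_of_mem_range hsum hpm hmp habel hmixp hmixm s hα y
  have hxβ : (s • (Pp - Pm)) ⁅x, β⁆ = ⁅(s • (Pp - Pm)) x, β⁆ := by
    rw [← lie_skew, map_neg, smul_sub_apply_lie_of_mem_range hsum hpm hmp habel hmixp hmixm s hβ x,
      lie_skew]
  have hαβ : ⁅α, β⁆ = 0 := by
    obtain ⟨u, rfl⟩ := hα
    obtain ⟨v, rfl⟩ := hβ
    exact habel u v
  rw [← smul_sub_mcybe hsum hpm hmp hsubp hsubm habel hmixp hmixm s x y]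
  simp only [add_lie, lie_add, map_add, hαy, hxβ, hαβ]
  abel

end Lie

theorem block_r_matrix_mcybe_general (K : Type*) [Field K]
    (J : Type*) [LieRing J] [LieAlgebra K J]
    (Pp Pm P0 : J →ₗ[K] J)
    (hsum : Pp + Pm + P0 = LinearMap.id)
    (hpm : Pp ∘ₗ Pm = 0) (hmp : Pm ∘ₗ Pp = 0)
    (h0p : P0 ∘ₗ Pp = 0) (h0m : P0 ∘ₗ Pm = 0)
    (hsubp : ∀ x y : J, Pp ⁅Pp x, Pp y⁆ = ⁅Pp x, Pp y⁆)
    (hsubm : ∀ x y : J, Pm ⁅Pm x, Pm y⁆ = ⁅Pm x, Pm y⁆)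
    (habel : ∀ x y : J, ⁅P0 x, P0 y⁆ = 0)
    (hmixp : ∀ x y : J, Pp ⁅Pp x, P0 y⁆ = ⁅Pp x, P0 y⁆)
    (hmixm : ∀ x y : J, Pm ⁅Pm x, P0 y⁆ = ⁅Pm x, P0 y⁆)
    (a b c d : J →ₗ[K] J)
    (ha : P0 ∘ₗ a ∘ₗ P0 = a) (hb : P0 ∘ₗ b ∘ₗ P0 = b)
    (hc : P0 ∘ₗ c ∘ₗ P0 = c) (hd : P0 ∘ₗ d ∘ₗ P0 = d) :
    ∀ X Y : J × J,
      let r : J →ₗ[K] J := (1 / 2 : K) • (Pp - Pm)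
      let R : J × J → J × J := fun Z =>
        (r Z.1 + a (P0 Z.1) + b (P0 Z.2), c (P0 Z.1) + r Z.2 + d (P0 Z.2))
      let bk : J × J → J × J → J × J := fun U V => (⁅U.1, V.1⁆, ⁅U.2, V.2⁆)
      bk (R X) (R Y) - R (bk (R X) Y + bk X (R Y)) = -((1 / 4 : K) • bk X Y) := by
  rintro ⟨x₁, x₂⟩ ⟨y₁, y₂⟩ r R bk
  have hR : ∀ Z, R Z = (r Z.1 + (a (P0 Z.1) + b (P0 Z.2)), r Z.2 + (c (P0 Z.1) + d (P0 Z.2))) :=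
    fun Z => Prod.ext (add_assoc _ _ _) ((add_right_comm _ _ _).trans (add_comm _ _))
  have hab : ∀ u v, a (P0 u) + b (P0 v) ∈ LinearMap.range P0 := fun u v =>
    add_mem (apply_mem_range_of_comp_comp_eq ha _) (apply_mem_range_of_comp_comp_eq hb _)
  have hcd : ∀ u v, c (P0 u) + d (P0 v) ∈ LinearMap.range P0 := fun u v =>
    add_mem (apply_mem_range_of_comp_comp_eq hc _) (apply_mem_range_of_comp_comp_eq hd _)
  have hP0₁ := apply_lie_add_add_lie_add_eq_zero_of_mem_range hsum h0p h0m hsubp hsubm habel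
    hmixp hmixm (1 / 2 : K) x₁ y₁ (hab x₁ x₂) (hab y₁ y₂)
  have hP0₂ := apply_lie_add_add_lie_add_eq_zero_of_mem_range hsum h0p h0m hsubp hsubm habel
    hmixp hmixm (1 / 2 : K) x₂ y₂ (hcd x₁ x₂) (hcd y₁ y₂)
  have hR₁ := smul_sub_add_mcybe_of_mem_range hsum hpm hmp hsubp hsubm habel hmixp hmixm
    (1 / 2 : K) x₁ y₁ (hab x₁ x₂) (hab y₁ y₂)
  have hR₂ := smul_sub_add_mcybe_of_mem_range hsum hpm hmp hsubp hsubm habel hmixp hmixm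
    (1 / 2 : K) x₂ y₂ (hcd x₁ x₂) (hcd y₁ y₂)
  have hs : (1 / 2 : K) ^ 2 = 1 / 4 := by norm_num
  simp only [bk, hR, r, Prod.mk_add_mk, Prod.mk_sub_mk, Prod.smul_mk, Prod.neg_mk, hP0₁, hP0₂,
    map_zero, add_zero, hR₁, hR₂, hs]

/-- Theorem 4.5: if 𝔍 = 𝔍₊ ⊕ 𝔍₀ ⊕ 𝔍₋ with 𝔍₀ abelian and [𝔍±,𝔍₀] ⊆ 𝔍±
(expressed via the projections P₊, P₋, P₀), r = (1/2)(P₊ - P₋), and a,b,c,d are any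
linear operators on 𝔍₀, then R = [[r + aP₀, bP₀],[cP₀, r + dP₀]] on 𝔍 ⊕ 𝔍 satisfies
the modified classical Yang-Baxter equation. -/
theorem block_r_matrix_mcybe (K : Type*) [Field K] [CharZero K]
    (J : Type*) [LieRing J] [LieAlgebra K J]
    (Pp Pm P0 : J →ₗ[K] J)
    (hsum : Pp + Pm + P0 = LinearMap.id)
    (hpp : Pp ∘ₗ Pp = Pp) (hmm : Pm ∘ₗ Pm = Pm) (h00 : P0 ∘ₗ P0 = P0)
    (hpm : Pp ∘ₗ Pm = 0) (hmp : Pm ∘ₗ Pp = 0)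
    (hp0 : Pp ∘ₗ P0 = 0) (h0p : P0 ∘ₗ Pp = 0)
    (hm0 : Pm ∘ₗ P0 = 0) (h0m : P0 ∘ₗ Pm = 0)
    (hsubp : ∀ x y : J, Pp ⁅Pp x, Pp y⁆ = ⁅Pp x, Pp y⁆)
    (hsubm : ∀ x y : J, Pm ⁅Pm x, Pm y⁆ = ⁅Pm x, Pm y⁆)
    (habel : ∀ x y : J, ⁅P0 x, P0 y⁆ = 0)
    (hmixp : ∀ x y : J, Pp ⁅Pp x, P0 y⁆ = ⁅Pp x, P0 y⁆)
    (hmixm : ∀ x y : J, Pm ⁅Pm x, P0 y⁆ = ⁅Pm x, P0 y⁆)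
    (a b c d : J →ₗ[K] J)
    (ha : P0 ∘ₗ a ∘ₗ P0 = a) (hb : P0 ∘ₗ b ∘ₗ P0 = b)
    (hc : P0 ∘ₗ c ∘ₗ P0 = c) (hd : P0 ∘ₗ d ∘ₗ P0 = d) :
    ∀ X Y : J × J,
      let r : J →ₗ[K] J := (1 / 2 : K) • (Pp - Pm)
      let R : J × J → J × J := fun Z =>
        (r Z.1 + a (P0 Z.1) + b (P0 Z.2), c (P0 Z.1) + r Z.2 + d (P0 Z.2))
      let bk : J × J → J × J → J × J := fun U V => (⁅U.1, V.1⁆, ⁅U.2, V.2⁆)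
      bk (R X) (R Y) - R (bk (R X) Y + bk X (R Y)) = -((1 / 4 : K) • bk X Y) :=
  block_r_matrix_mcybe_general K J Pp Pm P0 hsum hpm hmp h0p h0m hsubp hsubm habel hmixp hmixm a b c
    d ha hb hc hd
end

section
/- In the q-pseudodifference algebra Ψ𝐃_q, the formal trace Tr A = ∫ Res A dz/z (the z⁰-coefficient of the D⁰-coefficient) satisfies Tr(AB) = Tr(BA) for all A, B ∈ Ψ𝐃_q. -/
private lemma hT_zpow {R : Type*} [CommRing R] (h : R ≃+* R)
    (T : R →+ ℂ) (hT : ∀ r : R, T (h r) = T r) :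
    ∀ (n : ℤ) (r : R), T ((h ^ n : R ≃+* R) r) = T r := by
  have hnat : ∀ (n : ℕ) (r : R), T ((h ^ n : R ≃+* R) r) = T r := by
    intro n
    induction n with
    | zero => intro r; rfl
    | succ k ih =>
      intro r
      have : (h ^ (k + 1) : R ≃+* R) r = (h ^ k : R ≃+* R) (h r) := by
        rw [pow_succ]; rfl
      rw [this, ih, hT]
  intro n r
  induction n using Int.induction_on with
  | zero => rfl
  | succ k _ =>
    have : (h ^ ((k : ℤ) + 1) : R ≃+* R) = h ^ (k + 1 : ℕ) := by
      rw [← zpow_natCast]; norm_num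
    rw [this, hnat]
  | pred k _ =>
    have key : ∀ r : R, T ((h ^ (-(k : ℤ) - 1) : R ≃+* R) r) = T r := by
      intro s
      have h1 : (h ^ ((k : ℤ) + 1) : R ≃+* R) ((h ^ (-(k : ℤ) - 1) : R ≃+* R) s) = s := by
        have : (h ^ ((k : ℤ) + 1) : R ≃+* R) * (h ^ (-(k : ℤ) - 1) : R ≃+* R) = 1 := by
          rw [← zpow_add]; norm_num
        calc (h ^ ((k : ℤ) + 1) : R ≃+* R) ((h ^ (-(k : ℤ) - 1) : R ≃+* R) s)
            = ((h ^ ((k : ℤ) + 1) : R ≃+* R) * (h ^ (-(k : ℤ) - 1) : R ≃+* R)) s := rfl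
          _ = s := by rw [this]; rfl
      have h2 : (h ^ ((k : ℤ) + 1) : R ≃+* R) = h ^ (k + 1 : ℕ) := by
        rw [← zpow_natCast]; norm_num
      have := hnat (k + 1) ((h ^ (-(k : ℤ) - 1) : R ≃+* R) s)
      rw [← h2, h1] at this
      exact this.symm
    exact key r

/-- The formal trace on Ψ𝐃_q is symmetric: Tr(AB) = Tr(BA).  An operator
Σ a_i D^i (support bounded above) is encoded by its coefficient function ℤ → R, where
R is the commutative ring of Laurent series with dilation automorphism h, and T : R → ℂ
is the dilation-invariant functional ∫ · dz/z (z⁰-coefficient).  Since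
(A·B)₀ = Σ_i A_i · h^i(B_{-i}), the claim reads as below. -/
theorem formal_trace_symmetric (R : Type*) [CommRing R] (h : R ≃+* R)
    (T : R →+ ℂ) (hT : ∀ r : R, T (h r) = T r)
    (A B : ℤ → R)
    (hA : ∃ N : ℤ, ∀ i > N, A i = 0) (hB : ∃ N : ℤ, ∀ i > N, B i = 0) :
    T (∑ᶠ i : ℤ, A i * (h ^ i : R ≃+* R) (B (-i)))
      = T (∑ᶠ i : ℤ, B i * (h ^ i : R ≃+* R) (A (-i))) := by
  obtain ⟨NA, hNA⟩ := hA
  obtain ⟨NB, hNB⟩ := hB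
  -- finite supports
  have hsupp : ∀ (C D : ℤ → R) (NC ND : ℤ), (∀ i > NC, C i = 0) → (∀ i > ND, D i = 0) →
      (Function.support fun i : ℤ => C i * (h ^ i : R ≃+* R) (D (-i))).Finite := by
    intro C D NC ND hC hD
    apply Set.Finite.subset (Set.finite_Icc (-ND) NC)
    intro i hi
    simp only [Function.mem_support] at hi
    by_contra hmem
    simp only [Set.mem_Icc, not_and_or, not_le] at hmem
    rcases hmem with h1 | h2
    · have : D (-i) = 0 := hD (-i) (by omega)
      rw [this] at hi; simp at hi
    · rw [hC i h2] at hi; simp at hi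
  have hfA := hsupp A B NA NB hNA hNB
  have hfB := hsupp B A NB NA hNB hNA
  rw [T.map_finsum hfA, T.map_finsum hfB]
  have key : ∀ i : ℤ, T (A i * (h ^ i : R ≃+* R) (B (-i)))
      = T (B (-i) * (h ^ (-i) : R ≃+* R) (A i)) := by
    intro i
    have h1 : (h ^ i : R ≃+* R) (B (-i) * (h ^ (-i) : R ≃+* R) (A i))
        = A i * (h ^ i : R ≃+* R) (B (-i)) := by
      rw [map_mul]
      have : (h ^ i : R ≃+* R) ((h ^ (-i) : R ≃+* R) (A i)) = A i := by
        have : (h ^ i : R ≃+* R) * (h ^ (-i) : R ≃+* R) = 1 := by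
          rw [← zpow_add]; norm_num
        calc (h ^ i : R ≃+* R) ((h ^ (-i) : R ≃+* R) (A i))
            = ((h ^ i : R ≃+* R) * (h ^ (-i) : R ≃+* R)) (A i) := rfl
          _ = A i := by rw [this]; rfl
      rw [this, mul_comm]
    rw [← h1, hT_zpow h T hT]
  calc (∑ᶠ i : ℤ, T (A i * (h ^ i : R ≃+* R) (B (-i))))
      = ∑ᶠ i : ℤ, T (B (-i) * (h ^ (-i) : R ≃+* R) (A i)) := finsum_congr key
    _ = ∑ᶠ i : ℤ, T (B i * (h ^ i : R ≃+* R) (A (-i))) := by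
        rw [← finsum_comp (g := fun i : ℤ => T (B i * (h ^ i : R ≃+* R) (A (-i))))
          (fun i : ℤ => -i) (Equiv.neg ℤ).bijective]
        simp only [neg_neg]
end
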